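/- arXiv:2204.04934 — 3 statements merged into one kernel-verified Lean document; each statement's English description precedes it below -/
import Mathlib

section
/- Suppose V, Ω : [0,T) → ℝ are differentiable with V' = Ω·V, Ω' = Ω·V², Ω(t) ≥ 0 for all t, and V(0) ≥ √(2·Ω(0)) with Ω(0) > 0. Then Ω'(t) ≥ 2·Ω(t)² for all t ∈ [0,T), and consequently T ≤ 1/(2·Ω(0)). -/
/-!
`V² - 2Ω` is conserved along the flow and starts nonnegative, so `V² ≥ 2Ω` for all time, and
`Ω' = ΩV² ≥ 0`, so `Ω ≥ Ω 0 > 0`. Hence `Ω' ≥ 2Ω²`, i.e. `(1/Ω)' ≤ -2`,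
so `0 < 1/Ω t ≤ 1/Ω 0 - 2t`, which forces `t < 1/(2 Ω 0)` for every `t ∈ [0, T)`.
-/

open Set

lemma monotoneOn_of_hasDerivAt_nonneg {D : Set ℝ} (hD : Convex ℝ D) {f f' : ℝ → ℝ}
    (hf : ∀ x ∈ D, HasDerivAt f (f' x) x) (hf' : ∀ x ∈ D, 0 ≤ f' x) : MonotoneOn f D :=
  monotoneOn_of_hasDerivWithinAt_nonneg hD
    (fun x hx ↦ (hf x hx).continuousAt.continuousWithinAt)
    (fun x hx ↦ (hf x (interior_subset hx)).hasDerivWithinAt)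
    (fun x hx ↦ hf' x (interior_subset hx))

lemma le_of_hasDerivAt_mul_nonneg {T : ℝ} {Ω g : ℝ → ℝ}
    (hΩ : ∀ t ∈ Ico 0 T, HasDerivAt Ω (Ω t * g t) t) (hg : ∀ t ∈ Ico 0 T, 0 ≤ g t)
    (hΩpos : ∀ t ∈ Ico 0 T, 0 ≤ Ω t) {t : ℝ} (ht : t ∈ Ico 0 T) : Ω 0 ≤ Ω t :=
  monotoneOn_of_hasDerivAt_nonneg (convex_Ico 0 T) hΩ
    (fun s hs ↦ mul_nonneg (hΩpos s hs) (hg s hs)) (left_mem_Ico.2 (ht.1.trans_lt ht.2)) ht ht.1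

lemma sq_sub_two_mul_nonneg {T : ℝ} {V Ω : ℝ → ℝ}
    (hV : ∀ t ∈ Ico 0 T, HasDerivAt V (Ω t * V t) t)
    (hΩ : ∀ t ∈ Ico 0 T, HasDerivAt Ω (Ω t * V t ^ 2) t)
    (h₀ : 0 ≤ V 0 ^ 2 - 2 * Ω 0) {t : ℝ} (ht : t ∈ Ico 0 T) : 0 ≤ V t ^ 2 - 2 * Ω t := by
  have hconserved : MonotoneOn (fun t ↦ V t ^ 2 - 2 * Ω t) (Ico 0 T) :=
    monotoneOn_of_hasDerivAt_nonneg (convex_Ico 0 T)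
      (fun t ht ↦ (((hV t ht).fun_pow 2).fun_sub ((hΩ t ht).const_mul 2)).congr_deriv
        (by ring : _ = (0 : ℝ)))
      fun _ _ ↦ le_rfl
  exact h₀.trans (hconserved (left_mem_Ico.2 (ht.1.trans_lt ht.2)) ht ht.1)

lemma le_one_div_of_sq_le_deriv {T k : ℝ} (hk : 0 < k) {Ω Ω' : ℝ → ℝ} (hΩ0 : 0 < Ω 0)
    (hΩ : ∀ t ∈ Ico 0 T, HasDerivAt Ω (Ω' t) t) (hΩpos : ∀ t ∈ Ico 0 T, 0 < Ω t)
    (hriccati : ∀ t ∈ Ico 0 T, k * Ω t ^ 2 ≤ Ω' t) :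
    T ≤ 1 / (k * Ω 0) := by
  have hmono : MonotoneOn (fun t ↦ -((Ω t)⁻¹ + k * t)) (Ico 0 T) := by
    refine monotoneOn_of_hasDerivAt_nonneg (convex_Ico 0 T)
      (fun t ht ↦ (((hΩ t ht).inv (hΩpos t ht).ne').add ((hasDerivAt_id t).const_mul k)).neg)
      fun t ht ↦ ?_
    have hΩt := hΩpos t ht
    have : k ≤ Ω' t / Ω t ^ 2 := (le_div_iff₀ (by positivity)).2 (hriccati t ht)
    simp only [neg_div]
    linarith
  by_contra! hT
  set t₀ := 1 / (k * Ω 0)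
  have ht₀ : t₀ ∈ Ico 0 T := ⟨by positivity, hT⟩
  have hdecay : (Ω t₀)⁻¹ + k * t₀ ≤ (Ω 0)⁻¹ + k * 0 :=
    neg_le_neg_iff.mp (hmono (left_mem_Ico.2 (ht₀.1.trans_lt hT)) ht₀ ht₀.1)
  have hkt₀ : k * t₀ = (Ω 0)⁻¹ := by simp only [t₀]; field_simp
  have := inv_pos.mpr (hΩpos t₀ ht₀)
  linarith

/-- Case 1 of the blow-up theorem: with `V' = Ω V`, `Ω' = Ω V²`, `Ω ≥ 0`,
`V 0 ≥ √(2 Ω 0)` and `Ω 0 > 0`, the Riccati inequality `Ω' ≥ 2 Ω²` holds and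
`T ≤ 1 / (2 Ω 0)`. -/
theorem stmt3 (T : ℝ) (V Ω : ℝ → ℝ)
    (hV : ∀ t ∈ Set.Ico (0 : ℝ) T, HasDerivAt V (Ω t * V t) t)
    (hΩ : ∀ t ∈ Set.Ico (0 : ℝ) T, HasDerivAt Ω (Ω t * V t ^ 2) t)
    (hΩpos : ∀ t ∈ Set.Ico (0 : ℝ) T, 0 ≤ Ω t)
    (hΩ0 : 0 < Ω 0)
    (hV0 : Real.sqrt (2 * Ω 0) ≤ V 0) :
    (∀ t ∈ Set.Ico (0 : ℝ) T, 2 * Ω t ^ 2 ≤ deriv Ω t) ∧ T ≤ 1 / (2 * Ω 0) := by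
  have hV0sq : 0 ≤ V 0 ^ 2 - 2 * Ω 0 := sub_nonneg.mpr (Real.sqrt_le_iff.mp hV0).2
  have hriccati : ∀ t ∈ Ico 0 T, 2 * Ω t ^ 2 ≤ Ω t * V t ^ 2 := fun t ht ↦ by
    nlinarith [sq_sub_two_mul_nonneg hV hΩ hV0sq ht, hΩpos t ht]
  have hΩ_ge : ∀ t ∈ Ico 0 T, Ω 0 ≤ Ω t := fun _ ↦
    le_of_hasDerivAt_mul_nonneg hΩ (fun t _ ↦ sq_nonneg (V t)) hΩpos
  refine ⟨fun t ht ↦ (hΩ t ht).deriv ▸ hriccati t ht, ?_⟩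
  exact le_one_div_of_sq_le_deriv two_pos hΩ0 hΩ (fun t ht ↦ hΩ0.trans_le (hΩ_ge t ht)) hriccati
end

section
/- Suppose V, Ω : [0,T) → ℝ are differentiable, κ₀ > 0, Ω(t) ≥ 0 for all t, Ω(0) > 0, and they satisfy V' = Ω·V and Ω' = 3κ₀·Ω² + Ω·V². Then Ω(t) ≥ Ω(0)/(1 − 3κ₀·Ω(0)·t) for all t ∈ [0,T), and T ≤ 1/(3κ₀·Ω(0)). -/
/-- Case 2 (α = β = 1): with `V' = Ω V`, `Ω' = 3 κ₀ Ω² + Ω V²`, `Ω ≥ 0`, `Ω 0 > 0`,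
one has `Ω t ≥ Ω 0 / (1 - 3 κ₀ Ω 0 t)` on `[0,T)` and `T ≤ 1 / (3 κ₀ Ω 0)`. -/
theorem stmt4 (T κ₀ : ℝ) (V Ω : ℝ → ℝ) (hκ : 0 < κ₀)
    (hV : ∀ t ∈ Set.Ico (0 : ℝ) T, HasDerivAt V (Ω t * V t) t)
    (hΩ : ∀ t ∈ Set.Ico (0 : ℝ) T,
      HasDerivAt Ω (3 * κ₀ * Ω t ^ 2 + Ω t * V t ^ 2) t)
    (hΩpos : ∀ t ∈ Set.Ico (0 : ℝ) T, 0 ≤ Ω t)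
    (hΩ0 : 0 < Ω 0) :
    (∀ t ∈ Set.Ico (0 : ℝ) T, Ω 0 / (1 - 3 * κ₀ * Ω 0 * t) ≤ Ω t) ∧
      T ≤ 1 / (3 * κ₀ * Ω 0) := by
  rcases le_or_gt T 0 with hT | hT
  · constructor
    · intro t ht
      exact absurd (lt_of_le_of_lt ht.1 ht.2) (by linarith)
    · have : 0 < 1 / (3 * κ₀ * Ω 0) := by positivity
      linarith
  -- T > 0
  have hconv : Convex ℝ (Set.Ico (0:ℝ) T) := convex_Ico 0 T
  have hint : interior (Set.Ico (0:ℝ) T) = Set.Ioo 0 T := interior_Ico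
  have h0mem : (0:ℝ) ∈ Set.Ico (0:ℝ) T := Set.left_mem_Ico.mpr hT
  have hΩcont : ContinuousOn Ω (Set.Ico (0:ℝ) T) := fun t ht =>
    (hΩ t ht).continuousAt.continuousWithinAt
  have hmono : MonotoneOn Ω (Set.Ico (0:ℝ) T) := by
    apply monotoneOn_of_deriv_nonneg hconv hΩcont
    · rw [hint]
      exact fun x hx =>
        ((hΩ x (Set.Ioo_subset_Ico_self hx)).differentiableAt).differentiableWithinAt
    · rw [hint]
      intro x hx
      rw [(hΩ x (Set.Ioo_subset_Ico_self hx)).deriv]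
      have h1 := hΩpos x (Set.Ioo_subset_Ico_self hx)
      positivity
  have hΩt : ∀ t ∈ Set.Ico (0:ℝ) T, 0 < Ω t := fun t ht =>
    lt_of_lt_of_le hΩ0 (hmono h0mem ht ht.1)
  -- auxiliary function h = Ω⁻¹ + 3κ₀ t is antitone
  set h : ℝ → ℝ := fun t => (Ω t)⁻¹ + 3 * κ₀ * t with hh
  have hder : ∀ t ∈ Set.Ico (0:ℝ) T,
      HasDerivAt h (-(3 * κ₀ * Ω t ^ 2 + Ω t * V t ^ 2) / (Ω t) ^ 2 + 3 * κ₀) t := by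
    intro t ht
    have h1 := (hΩ t ht).inv (ne_of_gt (hΩt t ht))
    have h2 : HasDerivAt (fun s : ℝ => 3 * κ₀ * s) (3 * κ₀) t := by
      simpa using (hasDerivAt_id t).const_mul (3 * κ₀)
    exact h1.add h2
  have hderval : ∀ t ∈ Set.Ico (0:ℝ) T,
      -(3 * κ₀ * Ω t ^ 2 + Ω t * V t ^ 2) / (Ω t) ^ 2 + 3 * κ₀ ≤ 0 := by
    intro t ht
    have hΩt' := hΩt t ht
    have hne : Ω t ≠ 0 := ne_of_gt hΩt'
    have key : -(3 * κ₀ * Ω t ^ 2 + Ω t * V t ^ 2) / (Ω t) ^ 2 + 3 * κ₀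
        = -(V t ^ 2 / Ω t) := by
      field_simp
      ring
    rw [key, neg_nonpos]
    positivity
  have hanti : AntitoneOn h (Set.Ico (0:ℝ) T) := by
    apply antitoneOn_of_deriv_nonpos hconv
    · exact fun t ht => (hder t ht).continuousAt.continuousWithinAt
    · rw [hint]
      exact fun x hx =>
        ((hder x (Set.Ioo_subset_Ico_self hx)).differentiableAt).differentiableWithinAt
    · rw [hint]
      intro x hx
      rw [(hder x (Set.Ioo_subset_Ico_self hx)).deriv]
      exact hderval x (Set.Ioo_subset_Ico_self hx)
  have hkey : ∀ t ∈ Set.Ico (0:ℝ) T, (Ω t)⁻¹ + 3 * κ₀ * t ≤ (Ω 0)⁻¹ := by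
    intro t ht
    have := hanti h0mem ht ht.1
    simpa [hh] using this
  have hden : ∀ t ∈ Set.Ico (0:ℝ) T, 0 < 1 - 3 * κ₀ * Ω 0 * t := by
    intro t ht
    have h1 := hkey t ht
    have h2 : 0 < (Ω t)⁻¹ := inv_pos.mpr (hΩt t ht)
    have h3 : 3 * κ₀ * t < (Ω 0)⁻¹ := by linarith
    have h4 : Ω 0 * (3 * κ₀ * t) < Ω 0 * (Ω 0)⁻¹ := by
      exact mul_lt_mul_of_pos_left h3 hΩ0
    rw [mul_inv_cancel₀ (ne_of_gt hΩ0)] at h4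
    nlinarith
  constructor
  · intro t ht
    have h1 := hkey t ht
    have hΩt' := hΩt t ht
    have hd := hden t ht
    rw [div_le_iff₀ hd]
    have e1 : Ω t * (Ω t)⁻¹ = 1 := mul_inv_cancel₀ (ne_of_gt hΩt')
    have e2 : Ω 0 * (Ω 0)⁻¹ = 1 := mul_inv_cancel₀ (ne_of_gt hΩ0)
    nlinarith [mul_pos hΩt' hΩ0]
  · by_contra hc
    push_neg at hc
    set t0 : ℝ := 1 / (3 * κ₀ * Ω 0) with ht0
    have ht0pos : 0 < t0 := by positivity
    have ht0mem : t0 ∈ Set.Ico (0:ℝ) T := ⟨le_of_lt ht0pos, hc⟩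
    have := hden t0 ht0mem
    have : 3 * κ₀ * Ω 0 * t0 = 1 := by
      rw [ht0]
      field_simp
    linarith [hden t0 ht0mem]
end

section
/- Let V, Ω : [0,T) → ℝ be differentiable with V' = −V², 0 ≤ V(0), Ω(t) ≥ 0 for all t, κ₀ > 0, and Ω' = (3κ₀·Ω − 2·V)·Ω. Assume X(0) := 3κ₀·Ω(0) − 2·V(0) > 0. Then the function X(t) := 3κ₀·Ω(t) − 2·V(0) satisfies X'(t) ≥ X(t)² for all t ∈ [0,T), and consequently T ≤ 1/X(0). -/
/-- Theorem 4.2, Case 1 (α ≥ 2, β = 1): with `V' = -V²`, `V 0 ≥ 0`, `Ω ≥ 0`,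
`Ω' = (3 κ₀ Ω - 2 V) Ω` and `X 0 := 3 κ₀ Ω 0 - 2 V 0 > 0`, the function
`X t := 3 κ₀ Ω t - 2 V 0` satisfies `X' ≥ X²` on `[0,T)`, whence `T ≤ 1 / X 0`. -/
theorem stmt10 (T κ₀ : ℝ) (V Ω : ℝ → ℝ) (hκ : 0 < κ₀)
    (hV : ∀ t ∈ Set.Ico (0 : ℝ) T, HasDerivAt V (-(V t ^ 2)) t)
    (hV0 : 0 ≤ V 0)
    (hΩpos : ∀ t ∈ Set.Ico (0 : ℝ) T, 0 ≤ Ω t)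
    (hΩ : ∀ t ∈ Set.Ico (0 : ℝ) T,
      HasDerivAt Ω ((3 * κ₀ * Ω t - 2 * V t) * Ω t) t)
    (hX0 : 0 < 3 * κ₀ * Ω 0 - 2 * V 0) :
    (∀ t ∈ Set.Ico (0 : ℝ) T,
      (3 * κ₀ * Ω t - 2 * V 0) ^ 2 ≤
        deriv (fun s => 3 * κ₀ * Ω s - 2 * V 0) t) ∧
      T ≤ 1 / (3 * κ₀ * Ω 0 - 2 * V 0) := by
  set X : ℝ → ℝ := fun s => 3 * κ₀ * Ω s - 2 * V 0 with hXdef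
  set D : ℝ → ℝ := fun s => 3 * κ₀ * ((3 * κ₀ * Ω s - 2 * V s) * Ω s) with hDdef
  -- derivative of X
  have hX' : ∀ t ∈ Set.Ico (0 : ℝ) T, HasDerivAt X (D t) t := by
    intro t ht
    have := ((hΩ t ht).const_mul (3 * κ₀)).sub_const (2 * V 0)
    simpa [hXdef, hDdef] using this
  -- V t ≤ V 0 on [0,T)
  have hVle : ∀ t ∈ Set.Ico (0 : ℝ) T, V t ≤ V 0 := by
    intro t ht
    rcases eq_or_lt_of_le ht.1 with h0 | h0
    · rw [← h0]
    have hsub : Set.Icc (0 : ℝ) t ⊆ Set.Ico (0 : ℝ) T := fun x hx =>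
      ⟨hx.1, lt_of_le_of_lt hx.2 ht.2⟩
    have hanti : AntitoneOn V (Set.Icc (0 : ℝ) t) := by
      apply antitoneOn_of_deriv_nonpos (convex_Icc 0 t)
      · exact fun x hx => ((hV x (hsub hx)).continuousAt).continuousWithinAt
      · intro x hx
        rw [interior_Icc] at hx
        exact ((hV x (hsub ⟨hx.1.le, hx.2.le⟩)).differentiableAt).differentiableWithinAt
      · intro x hx
        rw [interior_Icc] at hx
        rw [(hV x (hsub ⟨hx.1.le, hx.2.le⟩)).deriv]
        nlinarith [sq_nonneg (V x)]
    exact hanti ⟨le_refl 0, h0.le⟩ ⟨h0.le, le_refl t⟩ h0.le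
  -- core inequality: if X t ≥ 0 then X t ^ 2 ≤ D t
  have core : ∀ t ∈ Set.Ico (0 : ℝ) T, 0 ≤ X t → X t ^ 2 ≤ D t := by
    intro t ht hXt
    have h1 := hVle t ht
    have h2 := hΩpos t ht
    simp only [hXdef, hDdef] at hXt ⊢
    nlinarith [mul_nonneg (mul_nonneg hκ.le h2) (sub_nonneg.2 h1),
      mul_nonneg hV0 hXt]
  -- positivity of X on [0,T)
  have key : ∀ t ∈ Set.Ico (0 : ℝ) T, 0 < X t := by
    by_contra h
    push_neg at h
    obtain ⟨t₁, ht₁, hXt₁⟩ := h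
    have hsub1 : Set.Icc (0 : ℝ) t₁ ⊆ Set.Ico (0 : ℝ) T := fun x hx =>
      ⟨hx.1, lt_of_le_of_lt hx.2 ht₁.2⟩
    have hcont : ContinuousOn X (Set.Icc (0 : ℝ) t₁) := fun x hx =>
      ((hX' x (hsub1 hx)).continuousAt).continuousWithinAt
    set S : Set ℝ := Set.Icc (0 : ℝ) t₁ ∩ X ⁻¹' Set.Iic 0 with hSdef
    have hSclosed : IsClosed S :=
      hcont.preimage_isClosed_of_isClosed isClosed_Icc isClosed_Iic
    have hSne : S.Nonempty := ⟨t₁, ⟨ht₁.1, le_refl _⟩, hXt₁⟩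
    have hSbdd : BddBelow S := ⟨0, fun x hx => hx.1.1⟩
    set s := sInf S with hsdef
    have hsS : s ∈ S := hSclosed.csInf_mem hSne hSbdd
    have hspos : 0 < s := by
      rcases lt_or_eq_of_le hsS.1.1 with h' | h'
      · exact h'
      · exfalso; have : X s ≤ 0 := hsS.2
        rw [← h'] at this
        exact absurd this (not_le.2 hX0)
    have hsub2 : Set.Icc (0 : ℝ) s ⊆ Set.Ico (0 : ℝ) T := fun x hx =>
      ⟨hx.1, lt_of_le_of_lt (hx.2.trans hsS.1.2) ht₁.2⟩
    -- X > 0 on [0, s)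
    have hXpos : ∀ x ∈ Set.Ico (0 : ℝ) s, 0 < X x := by
      intro x hx
      by_contra hc
      push_neg at hc
      have : x ∈ S := ⟨⟨hx.1, hx.2.le.trans hsS.1.2⟩, hc⟩
      exact absurd (csInf_le hSbdd this) (not_le.2 hx.2)
    -- X monotone on [0,s]
    have hmono : MonotoneOn X (Set.Icc (0 : ℝ) s) := by
      apply monotoneOn_of_deriv_nonneg (convex_Icc 0 s)
      · exact fun x hx => ((hX' x (hsub2 hx)).continuousAt).continuousWithinAt
      · intro x hx
        rw [interior_Icc] at hx
        exact ((hX' x (hsub2 ⟨hx.1.le, hx.2.le⟩)).differentiableAt).differentiableWithinAt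
      · intro x hx
        rw [interior_Icc] at hx
        have hxm : x ∈ Set.Ico (0 : ℝ) T := hsub2 ⟨hx.1.le, hx.2.le⟩
        rw [(hX' x hxm).deriv]
        have := core x hxm (hXpos x ⟨hx.1.le, hx.2⟩).le
        nlinarith [sq_nonneg (X x)]
    have := hmono ⟨le_refl 0, hspos.le⟩ ⟨hspos.le, le_refl s⟩ hspos.le
    have h2 : X s ≤ 0 := hsS.2
    have h3 : 0 < X 0 := by simpa [hXdef] using hX0
    linarith
  constructor
  · intro t ht
    rw [(hX' t ht).deriv]
    exact core t ht (key t ht).le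
  · -- Riccati comparison: t < 1 / X 0 for all t ∈ [0, T)
    have hbound : ∀ t ∈ Set.Ico (0 : ℝ) T, t < 1 / X 0 := by
      intro t ht
      set g : ℝ → ℝ := fun x => (X x)⁻¹ + x with hgdef
      have hsub : Set.Icc (0 : ℝ) t ⊆ Set.Ico (0 : ℝ) T := fun x hx =>
        ⟨hx.1, lt_of_le_of_lt hx.2 ht.2⟩
      have hg' : ∀ x ∈ Set.Ico (0 : ℝ) T,
          HasDerivAt g (-(D x) / (X x) ^ 2 + 1) x := by
        intro x hx
        exact ((hX' x hx).inv (key x hx).ne').add (hasDerivAt_id x)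
      have hgle : g t ≤ g 0 := by
        rcases eq_or_lt_of_le ht.1 with h0 | h0
        · rw [← h0]
        have hanti : AntitoneOn g (Set.Icc (0 : ℝ) t) := by
          apply antitoneOn_of_deriv_nonpos (convex_Icc 0 t)
          · exact fun x hx => ((hg' x (hsub hx)).continuousAt).continuousWithinAt
          · intro x hx
            rw [interior_Icc] at hx
            exact ((hg' x (hsub ⟨hx.1.le, hx.2.le⟩)).differentiableAt).differentiableWithinAt
          · intro x hx
            rw [interior_Icc] at hx
            have hxm : x ∈ Set.Ico (0 : ℝ) T := hsub ⟨hx.1.le, hx.2.le⟩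
            rw [(hg' x hxm).deriv]
            have hXx := key x hxm
            have hD := core x hxm hXx.le
            have hsq : (0:ℝ) < (X x) ^ 2 := by positivity
            have : 1 ≤ D x / (X x) ^ 2 := (one_le_div hsq).2 hD
            have hnd : -(D x) / (X x) ^ 2 = -(D x / (X x) ^ 2) := neg_div _ _
            rw [hnd]; linarith
        exact hanti ⟨le_refl 0, h0.le⟩ ⟨h0.le, le_refl t⟩ h0.le
      have hXt := key t ht
      have h1 : (X t)⁻¹ + t ≤ (X 0)⁻¹ + 0 := by simpa [hgdef] using hgle
      have h2 : 0 < (X t)⁻¹ := inv_pos.2 hXt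
      have : t < (X 0)⁻¹ := by linarith
      simpa [one_div] using this
    by_contra hcon
    push_neg at hcon
    have h1 : (0:ℝ) < 1 / X 0 := by positivity
    have := hbound (1 / X 0) ⟨h1.le, hcon⟩
    exact lt_irrefl _ this
end
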